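/- Let ζ > 0 and T > 0, and let w be a classical zero-input solution of the micro-beam system on [0,1] × [0,T]. Then ∫₀ᵀ ζ (∂³w/∂x³(0,t))² dt = ∫₀ᵀ ∫₀¹ ((∂w/∂t)² + 3 (∂²w/∂x²)² + 5ζ (∂³w/∂x³)²) dx dt + 2 ∫₀¹ [(x−1) (∂w/∂x)(x,T) (∂w/∂t)(x,T) − (x−1) (∂w/∂x)(x,0) (∂w/∂t)(x,0)] dx. -/

import Mathlib

open Set MeasureTheory intervalIntegral

/-- `wxD w m x t` is the `m`-th spatial derivative of `w` on `[0,1]`. -/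
noncomputable def wxD (w : ℝ → ℝ → ℝ) (m : ℕ) (x t : ℝ) : ℝ :=
  iteratedDerivWithin m (fun x' => w x' t) (Icc (0:ℝ) 1) x

/-- `wtD w T k x t` is the `k`-th time derivative of `w` on `[0,T]`. -/
noncomputable def wtD (w : ℝ → ℝ → ℝ) (T : ℝ) (k : ℕ) (x t : ℝ) : ℝ :=
  iteratedDerivWithin k (fun t' => w x t') (Icc (0:ℝ) T) t

/-- A classical zero-input solution of the micro-beam system on `[0,1] × [0,T]`:
`C⁶` in `x`, `C²` in `t`, jointly continuous with all these partial derivatives,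
satisfying the PDE and the boundary conditions. -/
def IsBeamSolution (ζ T : ℝ) (w : ℝ → ℝ → ℝ) : Prop :=
  (∀ t ∈ Icc (0:ℝ) T, ContDiffOn ℝ 6 (fun x => w x t) (Icc (0:ℝ) 1)) ∧
  (∀ x ∈ Icc (0:ℝ) 1, ContDiffOn ℝ 2 (fun t => w x t) (Icc (0:ℝ) T)) ∧
  (∀ m : ℕ, m ≤ 6 →
    ContinuousOn (fun p : ℝ × ℝ => wxD w m p.1 p.2) (Icc (0:ℝ) 1 ×ˢ Icc (0:ℝ) T)) ∧
  (∀ k : ℕ, k ≤ 2 →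
    ContinuousOn (fun p : ℝ × ℝ => wtD w T k p.1 p.2) (Icc (0:ℝ) 1 ×ˢ Icc (0:ℝ) T)) ∧
  (∀ x ∈ Icc (0:ℝ) 1, ∀ t ∈ Icc (0:ℝ) T,
    wxD w 4 x t - ζ * wxD w 6 x t + wtD w T 2 x t = 0) ∧
  (∀ t ∈ Icc (0:ℝ) T,
    w 0 t = 0 ∧ wxD w 1 0 t = 0 ∧ wxD w 2 0 t = 0 ∧
    ζ * wxD w 5 1 t - wxD w 3 1 t = 0 ∧
    wxD w 2 1 t - ζ * wxD w 4 1 t = 0 ∧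
    ζ * wxD w 3 1 t = 0)

/-- Kinetic energy. -/
noncomputable def kinE (w : ℝ → ℝ → ℝ) (T t : ℝ) : ℝ :=
  (1/2) * ∫ x in (0:ℝ)..1, (wtD w T 1 x t)^2

/-- Strain energy. -/
noncomputable def strE (ζ : ℝ) (w : ℝ → ℝ → ℝ) (t : ℝ) : ℝ :=
  (1/2) * ∫ x in (0:ℝ)..1, ((wxD w 2 x t)^2 + ζ * (wxD w 3 x t)^2)

/-- Total energy. -/
noncomputable def totE (ζ : ℝ) (w : ℝ → ℝ → ℝ) (T t : ℝ) : ℝ :=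
  kinE w T t + strE ζ w t

/-!
Multiplying the equation by `(x - 1) ∂ₓw` and integrating over `[0, 1]` gives, at each time,
`ζ (∂ₓ³w(0,t))² = ∫ 2(x-1) ∂ₓw ∂ₜ²w + 3 (∂ₓ²w)² + 5ζ (∂ₓ³w)² dx`: the integrand is an exact
`x`-derivative and the boundary conditions kill every boundary term except `ζ (∂ₓ³w(0,t))²`.

Integrating in time, the term with `∂ₜ²w` is handled by showing that
`G(t) = ∫ 2(x-1) ∂ₓw ∂ₜw dx` has derivative `∫ 2(x-1) ∂ₓw ∂ₜ²w - (∂ₜw)² dx`.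
No mixed derivative `∂ₜ∂ₓw` is available, so the difference quotient of `G` is rewritten with
`∫ 2(x-1) f' f = -∫ f²` (for `f = w(·,s) - w(·,t)`, which vanishes at `x = 0`) into an integral
whose integrand converges pointwise and stays bounded; dominated convergence gives the derivative.
-/

open Filter Topology

theorem ContDiffOn.hasDerivWithinAt_iteratedDerivWithin {n m : ℕ} {u : ℝ → ℝ} {a b x : ℝ}
    (hu : ContDiffOn ℝ n u (Icc a b)) (hab : a < b) (hm : m < n) (hx : x ∈ Icc a b) :
    HasDerivWithinAt (iteratedDerivWithin m u (Icc a b))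
      (iteratedDerivWithin (m + 1) u (Icc a b) x) (Icc a b) x := by
  rw [iteratedDerivWithin_succ]
  exact ((hu.differentiableOn_iteratedDerivWithin (mod_cast hm) (uniqueDiffOn_Icc hab)) x
    hx).hasDerivWithinAt

theorem integral_eq_sub_of_hasDerivWithinAt_Icc {f f' : ℝ → ℝ} {a b : ℝ} (hab : a ≤ b)
    (hf : ∀ x ∈ Icc a b, HasDerivWithinAt f (f' x) (Icc a b) x)
    (hf' : ContinuousOn f' (Icc a b)) :
    ∫ x in a..b, f' x = f b - f a :=
  integral_eq_sub_of_hasDerivAt_of_le hab (fun x hx => (hf x hx).continuousWithinAt)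
    (fun x hx => (hf x (Ioo_subset_Icc_self hx)).hasDerivAt (Icc_mem_nhds hx.1 hx.2))
    (hf'.intervalIntegrable_of_Icc hab)

theorem integral_beam_multiplier_eq {ζ : ℝ} {u : ℝ → ℝ} (hu : ContDiffOn ℝ 6 u (Icc 0 1))
    (h₁ : iteratedDerivWithin 1 u (Icc 0 1) 0 = 0) (h₂ : iteratedDerivWithin 2 u (Icc 0 1) 0 = 0)
    (h₃ : iteratedDerivWithin 2 u (Icc 0 1) 1 - ζ * iteratedDerivWithin 4 u (Icc 0 1) 1 = 0)
    (h₄ : ζ * iteratedDerivWithin 3 u (Icc 0 1) 1 = 0) :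
    ∫ x in (0:ℝ)..1, (2 * (x - 1) * iteratedDerivWithin 1 u (Icc 0 1) x
        * (ζ * iteratedDerivWithin 6 u (Icc 0 1) x - iteratedDerivWithin 4 u (Icc 0 1) x)
        + 3 * iteratedDerivWithin 2 u (Icc 0 1) x ^ 2
        + 5 * ζ * iteratedDerivWithin 3 u (Icc 0 1) x ^ 2)
      = ζ * iteratedDerivWithin 3 u (Icc 0 1) 0 ^ 2 := by
  set D : ℕ → ℝ → ℝ := fun m => iteratedDerivWithin m u (Icc 0 1)
  have hD : ∀ m < 6, ∀ x ∈ Icc (0:ℝ) 1, HasDerivWithinAt (D m) (D (m + 1) x) (Icc 0 1) x :=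
    fun m hm x hx => hu.hasDerivWithinAt_iteratedDerivWithin zero_lt_one (mod_cast hm) hx
  have hDc : ∀ m ≤ 6, ContinuousOn (D m) (Icc 0 1) :=
    fun m hm => hu.continuousOn_iteratedDerivWithin (mod_cast hm) (uniqueDiffOn_Icc zero_lt_one)
  -- `Q` comes from integrating the multiplier `(x - 1) u'` against the equation by parts.
  let Q : ℝ → ℝ := fun x => (x - 1) * D 2 x ^ 2 + 2 * D 1 x * D 2 x - 2 * (x - 1) * D 1 x * D 3 x
    + ζ * (2 * (x - 1) * D 1 x * D 5 x - 2 * D 1 x * D 4 x + 4 * D 2 x * D 3 x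
      - 2 * (x - 1) * D 2 x * D 4 x + (x - 1) * D 3 x ^ 2)
  have hQ : ∀ x ∈ Icc (0:ℝ) 1, HasDerivWithinAt Q (2 * (x - 1) * D 1 x * (ζ * D 6 x - D 4 x)
      + 3 * D 2 x ^ 2 + 5 * ζ * D 3 x ^ 2) (Icc 0 1) x := by
    intro x hx
    have hl : HasDerivWithinAt (fun y : ℝ => y - 1) 1 (Icc 0 1) x :=
      (hasDerivWithinAt_id x _).sub_const 1
    have d1 : HasDerivWithinAt (D 1) (D 2 x) (Icc 0 1) x := hD 1 (by norm_num) x hx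
    have d2 : HasDerivWithinAt (D 2) (D 3 x) (Icc 0 1) x := hD 2 (by norm_num) x hx
    have d3 : HasDerivWithinAt (D 3) (D 4 x) (Icc 0 1) x := hD 3 (by norm_num) x hx
    have d4 : HasDerivWithinAt (D 4) (D 5 x) (Icc 0 1) x := hD 4 (by norm_num) x hx
    have d5 : HasDerivWithinAt (D 5) (D 6 x) (Icc 0 1) x := hD 5 (by norm_num) x hx
    refine ((((hl.mul (d2.pow 2)).add ((d1.const_mul 2).mul d2)).sub
      (((hl.const_mul 2).mul d1).mul d3)).add
      ((((((((hl.const_mul 2).mul d1).mul d5).sub ((d1.const_mul 2).mul d4)).add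
        ((d2.const_mul 4).mul d3)).sub (((hl.const_mul 2).mul d2).mul d4)).add
        (hl.mul (d3.pow 2))).const_mul ζ)).congr_deriv ?_
    simp only [Pi.pow_apply, Pi.mul_apply]
    ring
  have hcont : ContinuousOn (fun x => 2 * (x - 1) * D 1 x * (ζ * D 6 x - D 4 x)
      + 3 * D 2 x ^ 2 + 5 * ζ * D 3 x ^ 2) (Icc 0 1) := by
    have := hDc 1 (by norm_num); have := hDc 2 (by norm_num); have := hDc 3 (by norm_num)
    have := hDc 4 (by norm_num); have := hDc 6 (by norm_num)
    fun_prop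
  rw [integral_eq_sub_of_hasDerivWithinAt_Icc zero_le_one hQ hcont]
  simp only [Q, D] at h₁ h₂ h₃ h₄ ⊢
  rw [h₁, h₂]
  linear_combination 2 * iteratedDerivWithin 1 u (Icc 0 1) 1 * h₃
    + 4 * iteratedDerivWithin 2 u (Icc 0 1) 1 * h₄

section Rectangle

variable {F G : ℝ → ℝ → ℝ} {a b c d : ℝ}

theorem continuousOn_intervalIntegral_of_continuousOn_prod (hab : a ≤ b) (hcd : c ≤ d)
    (hF : ContinuousOn (fun p : ℝ × ℝ => F p.1 p.2) (Icc a b ×ˢ Icc c d)) :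
    ContinuousOn (fun t => ∫ x in a..b, F x t) (Icc c d) := by
  let F' : ℝ → ℝ → ℝ := fun t x => F (projIcc a b hab x) (projIcc c d hcd t)
  have hF' : Continuous (Function.uncurry F') :=
    hF.comp_continuous
      (f := fun p : ℝ × ℝ => ((projIcc a b hab p.2 : ℝ), (projIcc c d hcd p.1 : ℝ))) (by fun_prop) fun p => ⟨Subtype.prop _, Subtype.prop _⟩
  refine (continuous_parametric_intervalIntegral_of_continuous' hF' a b).continuousOn.congr
    fun t ht => integral_congr fun x hx => ?_
  rw [uIcc_of_le hab] at hx
  simp [F', projIcc_of_mem hab hx, projIcc_of_mem hcd ht]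

theorem integral_integral_add (hab : a ≤ b) (hcd : c ≤ d)
    (hF : ContinuousOn (fun p : ℝ × ℝ => F p.1 p.2) (Icc a b ×ˢ Icc c d))
    (hG : ContinuousOn (fun p : ℝ × ℝ => G p.1 p.2) (Icc a b ×ˢ Icc c d)) :
    ∫ t in c..d, ∫ x in a..b, (F x t + G x t)
      = (∫ t in c..d, ∫ x in a..b, F x t) + ∫ t in c..d, ∫ x in a..b, G x t := by
  rw [← integral_add
    ((continuousOn_intervalIntegral_of_continuousOn_prod hab hcd hF).intervalIntegrable_of_Icc hcd)
    ((continuousOn_intervalIntegral_of_continuousOn_prod hab hcd hG).intervalIntegrable_of_Icc hcd)]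
  refine integral_congr fun t ht => integral_add ?_ ?_
  all_goals rw [uIcc_of_le hcd] at ht
  · exact (ContinuousOn.uncurry_right (f := F) t ht hF).intervalIntegrable_of_Icc hab
  · exact (ContinuousOn.uncurry_right (f := G) t ht hG).intervalIntegrable_of_Icc hab

theorem exists_abs_le_of_continuousOn_prod
    (hF : ContinuousOn (fun p : ℝ × ℝ => F p.1 p.2) (Icc a b ×ˢ Icc c d)) :
    ∃ M, ∀ x ∈ Icc a b, ∀ t ∈ Icc c d, |F x t| ≤ M := by
  obtain ⟨M, hM⟩ := (isCompact_Icc.prod isCompact_Icc).exists_bound_of_continuousOn hF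
  exact ⟨M, fun x hx t ht => hM (x, t) ⟨hx, ht⟩⟩

end Rectangle

section MeanValue

variable {g g' g'' : ℝ → ℝ} {a b M s t : ℝ}

theorem abs_sub_le_of_hasDerivWithinAt {S : Set ℝ} (hS : Convex ℝ S)
    (hg : ∀ x ∈ S, HasDerivWithinAt g (g' x) S x) (hM : ∀ x ∈ S, |g' x| ≤ M)
    (hs : s ∈ S) (ht : t ∈ S) : |g s - g t| ≤ M * |s - t| := by
  simpa only [Real.norm_eq_abs] using hS.norm_image_sub_le_of_norm_hasDerivWithin_le hg
    (by simpa only [Real.norm_eq_abs] using hM) ht hs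

theorem abs_slope_le_of_hasDerivWithinAt (hg : ∀ x ∈ Icc a b, HasDerivWithinAt g (g' x) (Icc a b) x)
    (hM : ∀ x ∈ Icc a b, |g' x| ≤ M) (hs : s ∈ Icc a b) (ht : t ∈ Icc a b) :
    |slope g t s| ≤ M := by
  rw [slope_def_field, abs_div]
  exact div_le_of_le_mul₀ (abs_nonneg _) ((abs_nonneg _).trans (hM s hs))
    (abs_sub_le_of_hasDerivWithinAt (convex_Icc a b) hg hM hs ht)

theorem abs_deriv_sub_slope_div_le (hg : ∀ x ∈ Icc a b, HasDerivWithinAt g (g' x) (Icc a b) x)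
    (hg' : ∀ x ∈ Icc a b, HasDerivWithinAt g' (g'' x) (Icc a b) x)
    (hM : ∀ x ∈ Icc a b, |g'' x| ≤ M) (hs : s ∈ Icc a b) (ht : t ∈ Icc a b) :
    |(g' s - slope g t s) / (s - t)| ≤ M := by
  have hst : uIcc t s ⊆ Icc a b := uIcc_subset_Icc ht hs
  have hM0 : 0 ≤ M := (abs_nonneg _).trans (hM s hs)
  -- mean value theorem for `σ ↦ g σ - σ g' s`, whose derivative is `O(|s - t|)` between `t` and `s`
  have hψ : |g s - g t - (s - t) * g' s| ≤ M * |s - t| * |s - t| := by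
    have := abs_sub_le_of_hasDerivWithinAt (convex_uIcc t s) (g := fun σ => g σ - σ * g' s)
      (g' := fun σ => g' σ - 1 * g' s)
      (fun σ hσ => ((hg σ (hst hσ)).mono hst).sub ((hasDerivWithinAt_id σ _).mul_const (g' s)))
      (fun σ hσ => by
        rw [one_mul]
        exact (abs_sub_le_of_hasDerivWithinAt (convex_Icc a b) hg' hM (hst hσ) hs).trans
          (by
            rw [abs_sub_comm σ]
            exact mul_le_mul_of_nonneg_left (abs_sub_right_of_mem_uIcc hσ) hM0))
      right_mem_uIcc left_mem_uIcc
    convert this using 2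
    ring
  have hid : (g' s - slope g t s) / (s - t) = -(g s - g t - (s - t) * g' s) / (s - t) ^ 2 := by
    rcases eq_or_ne s t with rfl | hne
    · simp
    · rw [slope_def_field]
      field_simp
      ring
  rw [hid, abs_div, abs_neg, abs_pow, sq]
  rw [mul_assoc] at hψ
  exact div_le_of_le_mul₀ (by positivity) hM0 hψ

end MeanValue

theorem integral_two_mul_sub_one_mul_deriv_mul_add_sq_eq_zero {f f' : ℝ → ℝ}
    (hf : ∀ x ∈ Icc (0:ℝ) 1, HasDerivWithinAt f (f' x) (Icc 0 1) x)
    (hf' : ContinuousOn f' (Icc 0 1)) (h0 : f 0 = 0) :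
    ∫ x in (0:ℝ)..1, (2 * (x - 1) * f' x * f x + f x ^ 2) = 0 := by
  have hd : ∀ x ∈ Icc (0:ℝ) 1, HasDerivWithinAt (fun y => (y - 1) * f y ^ 2)
      (2 * (x - 1) * f' x * f x + f x ^ 2) (Icc 0 1) x := fun x hx =>
    (((hasDerivWithinAt_id x _).sub_const 1).mul ((hf x hx).pow 2)).congr_deriv (by simp; ring)
  have hc : ContinuousOn f (Icc 0 1) := fun x hx => (hf x hx).continuousWithinAt
  rw [integral_eq_sub_of_hasDerivWithinAt_Icc zero_le_one hd (by fun_prop)]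
  simp [h0]

section TimeIdentity

variable {T : ℝ} {W U V A : ℝ → ℝ → ℝ}

noncomputable def multiplierIntegral (U V : ℝ → ℝ → ℝ) (t : ℝ) : ℝ :=
  ∫ x in (0:ℝ)..1, 2 * (x - 1) * U x t * V x t

/-- The integrand of `slope (multiplierIntegral U V) t s` once `∫ 2(x-1) f' f = -∫ f²` has been
used for `f = W · s - W · t`; unlike the raw difference quotient it converges pointwise as `s → t`,
although `U` has no time derivative. -/
noncomputable def multiplierSlopeIntegrand (W U V : ℝ → ℝ → ℝ) (t s x : ℝ) : ℝ :=
  2 * (x - 1) * (U x s - U x t) * ((V x s - slope (W x) t s) / (s - t))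
    - slope (W x) t s ^ 2 + 2 * (x - 1) * U x t * slope (V x) t s

theorem continuousOn_multiplierSlopeIntegrand
    (hWx : ∀ t ∈ Icc 0 T, ∀ x ∈ Icc (0:ℝ) 1, HasDerivWithinAt (W · t) (U x t) (Icc 0 1) x)
    (hU : ContinuousOn (fun p : ℝ × ℝ => U p.1 p.2) (Icc 0 1 ×ˢ Icc 0 T))
    (hV : ContinuousOn (fun p : ℝ × ℝ => V p.1 p.2) (Icc 0 1 ×ˢ Icc 0 T))
    {s t : ℝ} (hs : s ∈ Icc 0 T) (ht : t ∈ Icc 0 T) :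
    ContinuousOn (multiplierSlopeIntegrand W U V t s) (Icc 0 1) := by
  have hUs := ContinuousOn.uncurry_right (f := U) s hs hU
  have hUt := ContinuousOn.uncurry_right (f := U) t ht hU
  have hVs := ContinuousOn.uncurry_right (f := V) s hs hV
  have hVt := ContinuousOn.uncurry_right (f := V) t ht hV
  have hWs : ContinuousOn (W · s) (Icc 0 1) := fun x hx => (hWx s hs x hx).continuousWithinAt
  have hWt : ContinuousOn (W · t) (Icc 0 1) := fun x hx => (hWx t ht x hx).continuousWithinAt
  unfold multiplierSlopeIntegrand
  simp only [slope_def_field]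
  fun_prop

theorem slope_multiplierIntegral
    (hWx : ∀ t ∈ Icc 0 T, ∀ x ∈ Icc (0:ℝ) 1, HasDerivWithinAt (W · t) (U x t) (Icc 0 1) x)
    (hU : ContinuousOn (fun p : ℝ × ℝ => U p.1 p.2) (Icc 0 1 ×ˢ Icc 0 T))
    (hV : ContinuousOn (fun p : ℝ × ℝ => V p.1 p.2) (Icc 0 1 ×ˢ Icc 0 T))
    (hW0 : ∀ t ∈ Icc 0 T, W 0 t = 0) {s t : ℝ} (hs : s ∈ Icc 0 T) (ht : t ∈ Icc 0 T) :
    slope (multiplierIntegral U V) t s = ∫ x in (0:ℝ)..1, multiplierSlopeIntegrand W U V t s x := by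
  have hUs := ContinuousOn.uncurry_right (f := U) s hs hU
  have hUt := ContinuousOn.uncurry_right (f := U) t ht hU
  have hVs := ContinuousOn.uncurry_right (f := V) s hs hV
  have hVt := ContinuousOn.uncurry_right (f := V) t ht hV
  have hWs : ContinuousOn (W · s) (Icc 0 1) := fun x hx => (hWx s hs x hx).continuousWithinAt
  have hWt : ContinuousOn (W · t) (Icc 0 1) := fun x hx => (hWx t ht x hx).continuousWithinAt
  have hsq := integral_two_mul_sub_one_mul_deriv_mul_add_sq_eq_zero
    (f := fun x => W x s - W x t) (f' := fun x => U x s - U x t)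
    (fun x hx => (hWx s hs x hx).sub (hWx t ht x hx)) (hUs.sub hUt) (by simp [hW0 s hs, hW0 t ht])
  have hpt : ∀ x : ℝ, multiplierSlopeIntegrand W U V t s x
      = (s - t)⁻¹ * (2 * (x - 1) * U x s * V x s - 2 * (x - 1) * U x t * V x t)
        - ((s - t)⁻¹) ^ 2 * (2 * (x - 1) * (U x s - U x t) * (W x s - W x t)
          + (W x s - W x t) ^ 2) := by
    intro x
    simp only [multiplierSlopeIntegrand, slope_def_field]
    ring
  rw [integral_congr fun x _ => hpt x, intervalIntegral.integral_sub,
    intervalIntegral.integral_const_mul, intervalIntegral.integral_const_mul, hsq,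
    intervalIntegral.integral_sub, slope_def_field, multiplierIntegral, multiplierIntegral]
  · ring
  all_goals exact ContinuousOn.intervalIntegrable_of_Icc zero_le_one (by fun_prop)

theorem abs_multiplierSlopeIntegrand_le {x s t MU MV MA : ℝ} (hx : x ∈ Icc (0:ℝ) 1)
    (hs : s ∈ Icc 0 T) (ht : t ∈ Icc 0 T)
    (hWt : ∀ τ ∈ Icc 0 T, HasDerivWithinAt (W x) (V x τ) (Icc 0 T) τ)
    (hVt : ∀ τ ∈ Icc 0 T, HasDerivWithinAt (V x) (A x τ) (Icc 0 T) τ)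
    (hMU : ∀ τ ∈ Icc 0 T, |U x τ| ≤ MU) (hMV : ∀ τ ∈ Icc 0 T, |V x τ| ≤ MV)
    (hMA : ∀ τ ∈ Icc 0 T, |A x τ| ≤ MA) :
    |multiplierSlopeIntegrand W U V t s x| ≤ 2 * (MU + MU) * MA + MV ^ 2 + 2 * MU * MA := by
  have hx1 : |2 * (x - 1)| ≤ 2 := by
    rw [abs_mul, abs_two, abs_of_nonpos (by linarith [hx.2])]
    linarith [hx.1]
  have hUst : |U x s - U x t| ≤ MU + MU := (abs_sub _ _).trans (add_le_add (hMU s hs) (hMU t ht))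
  have hWsl := abs_slope_le_of_hasDerivWithinAt hWt hMV hs ht
  have hVsl := abs_slope_le_of_hasDerivWithinAt hVt hMA hs ht
  have hE := abs_deriv_sub_slope_div_le hWt hVt hMA hs ht
  have hMU0 : 0 ≤ MU := (abs_nonneg _).trans (hMU t ht)
  have hMA0 : 0 ≤ MA := (abs_nonneg _).trans (hMA t ht)
  calc _ ≤ |2 * (x - 1)| * |U x s - U x t| * |(V x s - slope (W x) t s) / (s - t)|
        + |slope (W x) t s| ^ 2 + |2 * (x - 1)| * |U x t| * |slope (V x) t s| := by
        simp only [multiplierSlopeIntegrand, ← abs_mul, ← abs_pow]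
        exact (abs_add_le _ _).trans (add_le_add_left (abs_sub _ _) _)
    _ ≤ _ := by gcongr; exact hMU t ht

theorem tendsto_multiplierSlopeIntegrand {x t MA : ℝ} (ht : t ∈ Ioo 0 T)
    (hWt : ∀ τ ∈ Icc 0 T, HasDerivWithinAt (W x) (V x τ) (Icc 0 T) τ)
    (hVt : ∀ τ ∈ Icc 0 T, HasDerivWithinAt (V x) (A x τ) (Icc 0 T) τ)
    (hU : ContinuousOn (U x) (Icc 0 T)) (hMA : ∀ τ ∈ Icc 0 T, |A x τ| ≤ MA) :
    Tendsto (fun s => multiplierSlopeIntegrand W U V t s x) (𝓝[≠] t)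
      (𝓝 (2 * (x - 1) * U x t * A x t - V x t ^ 2)) := by
  have htT : Icc 0 T ∈ 𝓝 t := Icc_mem_nhds ht.1 ht.2
  have hnear : ∀ᶠ s in 𝓝[≠] t, s ∈ Icc 0 T := nhdsWithin_le_nhds htT
  have hUlim : Tendsto (fun s => 2 * (x - 1) * (U x s - U x t)) (𝓝[≠] t) (𝓝 0) := by
    simpa using (((hU.continuousAt htT).tendsto.sub_const (U x t)).const_mul
      (2 * (x - 1))).mono_left nhdsWithin_le_nhds
  have hEbdd : IsBoundedUnder (· ≤ ·) (𝓝[≠] t)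
      (norm ∘ fun s => (V x s - slope (W x) t s) / (s - t)) :=
    isBoundedUnder_of_eventually_le (a := MA) (hnear.mono fun s hs =>
      abs_deriv_sub_slope_div_le hWt hVt hMA hs (Ioo_subset_Icc_self ht))
  have hWlim := hasDerivAt_iff_tendsto_slope.1 ((hWt t (Ioo_subset_Icc_self ht)).hasDerivAt htT)
  have hVlim := hasDerivAt_iff_tendsto_slope.1 ((hVt t (Ioo_subset_Icc_self ht)).hasDerivAt htT)
  unfold multiplierSlopeIntegrand
  convert ((hUlim.zero_mul_isBoundedUnder_le hEbdd).sub (hWlim.pow 2)).add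
    (hVlim.const_mul (2 * (x - 1) * U x t)) using 2
  ring

theorem hasDerivAt_multiplierIntegral
    (hWx : ∀ t ∈ Icc 0 T, ∀ x ∈ Icc (0:ℝ) 1, HasDerivWithinAt (W · t) (U x t) (Icc 0 1) x)
    (hWt : ∀ x ∈ Icc (0:ℝ) 1, ∀ t ∈ Icc 0 T, HasDerivWithinAt (W x) (V x t) (Icc 0 T) t)
    (hVt : ∀ x ∈ Icc (0:ℝ) 1, ∀ t ∈ Icc 0 T, HasDerivWithinAt (V x) (A x t) (Icc 0 T) t)
    (hU : ContinuousOn (fun p : ℝ × ℝ => U p.1 p.2) (Icc 0 1 ×ˢ Icc 0 T))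
    (hV : ContinuousOn (fun p : ℝ × ℝ => V p.1 p.2) (Icc 0 1 ×ˢ Icc 0 T))
    (hA : ContinuousOn (fun p : ℝ × ℝ => A p.1 p.2) (Icc 0 1 ×ˢ Icc 0 T))
    (hW0 : ∀ t ∈ Icc 0 T, W 0 t = 0) {t : ℝ} (ht : t ∈ Ioo 0 T) :
    HasDerivAt (multiplierIntegral U V)
      (∫ x in (0:ℝ)..1, (2 * (x - 1) * U x t * A x t - V x t ^ 2)) t := by
  have ht' : t ∈ Icc 0 T := Ioo_subset_Icc_self ht
  have hnear : ∀ᶠ s in 𝓝[≠] t, s ∈ Icc 0 T := nhdsWithin_le_nhds (Icc_mem_nhds ht.1 ht.2)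
  have hI : uIoc (0:ℝ) 1 ⊆ Icc 0 1 := by
    rw [uIoc_of_le zero_le_one]
    exact Ioc_subset_Icc_self
  obtain ⟨MU, hMU⟩ := exists_abs_le_of_continuousOn_prod hU
  obtain ⟨MV, hMV⟩ := exists_abs_le_of_continuousOn_prod hV
  obtain ⟨MA, hMA⟩ := exists_abs_le_of_continuousOn_prod hA
  rw [hasDerivAt_iff_tendsto_slope]
  refine Tendsto.congr'
    (hnear.mono fun s hs => (slope_multiplierIntegral hWx hU hV hW0 hs ht').symm) ?_
  refine tendsto_integral_filter_of_dominated_convergence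
    (fun _ => 2 * (MU + MU) * MA + MV ^ 2 + 2 * MU * MA) ?_ ?_ intervalIntegrable_const ?_
  · exact hnear.mono fun s hs => ((continuousOn_multiplierSlopeIntegrand hWx hU hV hs ht').mono
      hI).aestronglyMeasurable measurableSet_uIoc
  · exact hnear.mono fun s hs => ae_of_all _ fun x hx => abs_multiplierSlopeIntegrand_le (hI hx)
      hs ht' (hWt x (hI hx)) (hVt x (hI hx)) (hMU x (hI hx)) (hMV x (hI hx)) (hMA x (hI hx))
  · exact ae_of_all _ fun x hx => tendsto_multiplierSlopeIntegrand ht (hWt x (hI hx))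
      (hVt x (hI hx)) (ContinuousOn.uncurry_left (f := U) x (hI hx) hU) (hMA x (hI hx))

theorem integral_integral_eq_multiplierIntegral_sub (hT : 0 ≤ T)
    (hWx : ∀ t ∈ Icc 0 T, ∀ x ∈ Icc (0:ℝ) 1, HasDerivWithinAt (W · t) (U x t) (Icc 0 1) x)
    (hWt : ∀ x ∈ Icc (0:ℝ) 1, ∀ t ∈ Icc 0 T, HasDerivWithinAt (W x) (V x t) (Icc 0 T) t)
    (hVt : ∀ x ∈ Icc (0:ℝ) 1, ∀ t ∈ Icc 0 T, HasDerivWithinAt (V x) (A x t) (Icc 0 T) t)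
    (hU : ContinuousOn (fun p : ℝ × ℝ => U p.1 p.2) (Icc 0 1 ×ˢ Icc 0 T))
    (hV : ContinuousOn (fun p : ℝ × ℝ => V p.1 p.2) (Icc 0 1 ×ˢ Icc 0 T))
    (hA : ContinuousOn (fun p : ℝ × ℝ => A p.1 p.2) (Icc 0 1 ×ˢ Icc 0 T))
    (hW0 : ∀ t ∈ Icc 0 T, W 0 t = 0) :
    ∫ t in (0:ℝ)..T, ∫ x in (0:ℝ)..1, (2 * (x - 1) * U x t * A x t - V x t ^ 2)
      = multiplierIntegral U V T - multiplierIntegral U V 0 :=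
  integral_eq_sub_of_hasDerivAt_of_le hT
    (continuousOn_intervalIntegral_of_continuousOn_prod zero_le_one hT (by fun_prop))
    (fun _ ht => hasDerivAt_multiplierIntegral hWx hWt hVt hU hV hA hW0 ht)
    ((continuousOn_intervalIntegral_of_continuousOn_prod zero_le_one hT
      (by fun_prop)).intervalIntegrable_of_Icc hT)

end TimeIdentity

namespace IsBeamSolution

variable {ζ T : ℝ} {w : ℝ → ℝ → ℝ}

theorem integral_multiplier_eq (hw : IsBeamSolution ζ T w) {t : ℝ} (ht : t ∈ Icc 0 T) :
    ∫ x in (0:ℝ)..1, (2 * (x - 1) * wxD w 1 x t * wtD w T 2 x t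
      + 3 * wxD w 2 x t ^ 2 + 5 * ζ * wxD w 3 x t ^ 2) = ζ * wxD w 3 0 t ^ 2 := by
  obtain ⟨hwx, -, -, -, hpde, hbc⟩ := hw
  obtain ⟨-, h₁, h₂, -, h₃, h₄⟩ := hbc t ht
  refine (integral_congr fun x hx => ?_).trans
    (integral_beam_multiplier_eq (hwx t ht) h₁ h₂ h₃ h₄)
  rw [uIcc_of_le zero_le_one] at hx
  rw [show wtD w T 2 x t = ζ * wxD w 6 x t - wxD w 4 x t by linarith [hpde x hx t ht]]
  rfl

theorem integral_integral_multiplier_eq (hw : IsBeamSolution ζ T w) (hT : 0 < T) :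
    ∫ t in (0:ℝ)..T, ∫ x in (0:ℝ)..1,
        (2 * (x - 1) * wxD w 1 x t * wtD w T 2 x t - wtD w T 1 x t ^ 2)
      = 2 * ∫ x in (0:ℝ)..1, ((x - 1) * wxD w 1 x T * wtD w T 1 x T
          - (x - 1) * wxD w 1 x 0 * wtD w T 1 x 0) := by
  obtain ⟨hwx, hwt, hcx, hct, -, hbc⟩ := hw
  have hU := hcx 1 (by norm_num)
  have hV := hct 1 (by norm_num)
  have hWx : ∀ t ∈ Icc 0 T, ∀ x ∈ Icc (0:ℝ) 1,
      HasDerivWithinAt (w · t) (wxD w 1 x t) (Icc 0 1) x := fun t ht x hx => by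
    have h := (hwx t ht).hasDerivWithinAt_iteratedDerivWithin zero_lt_one (m := 0) (by norm_num) hx
    rwa [iteratedDerivWithin_zero] at h
  have hWt : ∀ x ∈ Icc (0:ℝ) 1, ∀ t ∈ Icc 0 T,
      HasDerivWithinAt (w x) (wtD w T 1 x t) (Icc 0 T) t := fun x hx t ht => by
    have h := (hwt x hx).hasDerivWithinAt_iteratedDerivWithin hT (m := 0) (by norm_num) ht
    rwa [iteratedDerivWithin_zero] at h
  have hVt : ∀ x ∈ Icc (0:ℝ) 1, ∀ t ∈ Icc 0 T,
      HasDerivWithinAt (wtD w T 1 x) (wtD w T 2 x t) (Icc 0 T) t :=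
    fun x hx t ht => (hwt x hx).hasDerivWithinAt_iteratedDerivWithin hT (m := 1) (by norm_num) ht
  have hUT := ContinuousOn.uncurry_right (f := wxD w 1) T (right_mem_Icc.2 hT.le) hU
  have hU0 := ContinuousOn.uncurry_right (f := wxD w 1) 0 (left_mem_Icc.2 hT.le) hU
  have hVT := ContinuousOn.uncurry_right (f := wtD w T 1) T (right_mem_Icc.2 hT.le) hV
  have hV0 := ContinuousOn.uncurry_right (f := wtD w T 1) 0 (left_mem_Icc.2 hT.le) hV
  rw [integral_integral_eq_multiplierIntegral_sub hT.le hWx hWt hVt hU hV (hct 2 le_rfl)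
    fun t ht => (hbc t ht).1, multiplierIntegral, multiplierIntegral,
    ← intervalIntegral.integral_sub, ← intervalIntegral.integral_const_mul]
  · exact integral_congr fun x _ => by ring
  all_goals exact ContinuousOn.intervalIntegrable_of_Icc zero_le_one (by fun_prop)

end IsBeamSolution

theorem stmt_15_general (ζ T : ℝ) (hT : 0 < T)
    (w : ℝ → ℝ → ℝ) (hw : IsBeamSolution ζ T w) :
    ∫ t in (0:ℝ)..T, ζ * (wxD w 3 0 t)^2
      = (∫ t in (0:ℝ)..T, ∫ x in (0:ℝ)..1,
          ((wtD w T 1 x t)^2 + 3 * (wxD w 2 x t)^2 + 5 * ζ * (wxD w 3 x t)^2))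
        + 2 * ∫ x in (0:ℝ)..1,
            ((x - 1) * wxD w 1 x T * wtD w T 1 x T
              - (x - 1) * wxD w 1 x 0 * wtD w T 1 x 0) := by
  obtain ⟨-, -, hcx, hct, -, -⟩ := id hw
  have := hcx 1 (by norm_num); have := hcx 2 (by norm_num); have := hcx 3 (by norm_num)
  have := hct 1 (by norm_num); have := hct 2 le_rfl
  calc ∫ t in (0:ℝ)..T, ζ * wxD w 3 0 t ^ 2
      = ∫ t in (0:ℝ)..T, ∫ x in (0:ℝ)..1,
          ((2 * (x - 1) * wxD w 1 x t * wtD w T 2 x t - wtD w T 1 x t ^ 2)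
            + (wtD w T 1 x t ^ 2 + 3 * wxD w 2 x t ^ 2 + 5 * ζ * wxD w 3 x t ^ 2)) := by
        refine integral_congr fun t ht => ?_
        rw [uIcc_of_le hT.le] at ht
        rw [← hw.integral_multiplier_eq ht]
        exact integral_congr fun x _ => by ring
    _ = _ := by
        rw [integral_integral_add zero_le_one hT.le (by fun_prop) (by fun_prop),
          hw.integral_integral_multiplier_eq hT]
        ring

/-- The multiplier identity for classical zero-input solutions of the
micro-beam system. -/
theorem stmt_15 (ζ T : ℝ) (hζ : 0 < ζ) (hT : 0 < T)
    (w : ℝ → ℝ → ℝ) (hw : IsBeamSolution ζ T w) :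
    ∫ t in (0:ℝ)..T, ζ * (wxD w 3 0 t)^2
      = (∫ t in (0:ℝ)..T, ∫ x in (0:ℝ)..1,
          ((wtD w T 1 x t)^2 + 3 * (wxD w 2 x t)^2 + 5 * ζ * (wxD w 3 x t)^2))
        + 2 * ∫ x in (0:ℝ)..1,
            ((x - 1) * wxD w 1 x T * wtD w T 1 x T
              - (x - 1) * wxD w 1 x 0 * wtD w T 1 x 0) :=
  stmt_15_general ζ T hT w hw
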